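/- Let A ∈ ℝ^{n×n}, u ∈ ℝ^n, and let Ã ∈ ℝ^{(n+1)×(n+1)} be the augmented matrix with upper-left block A, last column whose first n entries are u, and zero last row; let x̃₀ = e_{n+1} ∈ ℝ^{n+1} and let P = [I_n 0] ∈ ℝ^{n×(n+1)} be the projection onto the first n coordinates. Let δ ≥ 0, Ṽ ∈ ℝ^{(n+1)×ξ}, H̃ ∈ ℝ^{ξ×ξ}, and ε̃ ≥ 0 satisfy ‖exp(Ã δ) x̃₀ − Ṽ exp(H̃ δ) e₁‖ ≤ ε̃ δ. Then for every component i, |((∫_0^δ exp(A s) ds) u − P Ṽ exp(H̃ δ) e₁)_i| ≤ ε̃ δ; i.e., the constant-input particular solution ∫_0^δ exp(A s) ds · u lies in P Ṽ exp(H̃ δ) e₁ + { y ∈ ℝ^n : |y_i| ≤ ε̃ δ for all i }. -/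

import Mathlib

open Matrix

/-- Matrix exponential of a real square matrix. -/
noncomputable def mexp {m : ℕ} (A : Matrix (Fin m) (Fin m) ℝ) : Matrix (Fin m) (Fin m) ℝ :=
  NormedSpace.exp A

/-- Euclidean norm of a vector in `ℝ^m`. -/
noncomputable def enorm2 {m : ℕ} (x : Fin m → ℝ) : ℝ :=
  ‖(show EuclideanSpace ℝ (Fin m) from WithLp.toLp 2 x)‖

/-- First standard basis vector of `ℝ^ξ`. -/
noncomputable def e1 {ξ : ℕ} [NeZero ξ] : Fin ξ → ℝ := Pi.single 0 1

/-- The augmented matrix `Ã = [[A, u], [0, 0]]`. -/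
def aug {n : ℕ} (A : Matrix (Fin n) (Fin n) ℝ) (u : Fin n → ℝ) :
    Matrix (Fin (n + 1)) (Fin (n + 1)) ℝ :=
  Matrix.of fun i j =>
    Fin.lastCases 0 (fun i' => Fin.lastCases (u i') (fun j' => A i' j') j) i

/-- The entrywise integral `∫_0^t exp(A s) ds`. -/
noncomputable def intExp {n : ℕ} (A : Matrix (Fin n) (Fin n) ℝ) (t : ℝ) :
    Matrix (Fin n) (Fin n) ℝ :=
  Matrix.of fun i j => ∫ s in (0 : ℝ)..t, mexp (s • A) i j

/-- Projection `P = [I 0]` onto the first `n` coordinates. -/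
def proj {n : ℕ} (x : Fin (n + 1) → ℝ) : Fin n → ℝ := fun i => x i.castSucc

/-!
Augmenting the state by a constant coordinate turns the forced system into a homogeneous one:
`x̃(t) = (∫₀ᵗ exp(A s) ds · u, 1)` solves `x̃' = Ã x̃` with `x̃(0) = e_{n+1}`, because
`A ∫₀ᵗ exp(A s) ds + I = exp(A t)`. By uniqueness of solutions of linear ODEs,
`exp(Ã t) e_{n+1} = x̃(t)`, so the first `n` coordinates of the Krylov error vector are exactly
the error of `P Ṽ exp(H̃ δ) e₁`, and each coordinate is bounded by the Euclidean norm.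
-/

section MatrixExp

-- Any normed algebra structure on matrices serves to differentiate `exp`; it induces the
-- product topology used by the statements outside this section.
attribute [local instance] Matrix.linftyOpNormedRing Matrix.linftyOpNormedAlgebra

variable {m : ℕ}

theorem hasDerivAt_mexp_smul (B : Matrix (Fin m) (Fin m) ℝ) (t : ℝ) :
    HasDerivAt (fun s : ℝ => mexp (s • B)) (B * mexp (t • B)) t :=
  hasDerivAt_exp_smul_const' B t

theorem continuous_mexp_smul (B : Matrix (Fin m) (Fin m) ℝ) :
    Continuous fun s : ℝ => mexp (s • B) :=
  continuous_iff_continuousAt.2 fun t => (hasDerivAt_mexp_smul B t).continuousAt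

theorem hasDerivAt_mexp_smul_apply (B : Matrix (Fin m) (Fin m) ℝ) (i j : Fin m) (t : ℝ) :
    HasDerivAt (fun s : ℝ => mexp (s • B) i j) ((B * mexp (t • B)) i j) t :=
  (entryLinearMap ℝ ℝ i j).toContinuousLinearMap.hasFDerivAt.comp_hasDerivAt t
    (hasDerivAt_mexp_smul B t)

theorem intExp_eq_integral (A : Matrix (Fin m) (Fin m) ℝ) (t : ℝ) :
    intExp A t = ∫ s in (0 : ℝ)..t, mexp (s • A) :=
  Matrix.ext fun i j => (entryLinearMap ℝ ℝ i j).toContinuousLinearMap.intervalIntegral_comp_comm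
    ((continuous_mexp_smul A).intervalIntegrable (μ := MeasureTheory.volume) 0 t)

theorem mul_intExp_add_one (A : Matrix (Fin m) (Fin m) ℝ) (t : ℝ) :
    A * intExp A t + 1 = mexp (t • A) := by
  have hint := (continuous_mexp_smul A).intervalIntegrable (μ := MeasureTheory.volume) 0 t
  have hmul : ∫ s in (0 : ℝ)..t, A * mexp (s • A) = A * ∫ s in (0 : ℝ)..t, mexp (s • A) := by
    simpa using (ContinuousLinearMap.mul ℝ _ A).intervalIntegral_comp_comm hint
  rw [intExp_eq_integral, ← hmul,
    intervalIntegral.integral_eq_sub_of_hasDerivAt (fun s _ => hasDerivAt_mexp_smul A s)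
      (((continuous_mexp_smul A).const_mul A).intervalIntegrable (μ := MeasureTheory.volume) 0 t)]
  simp [mexp]

end MatrixExp

theorem hasDerivAt_intExp_apply {m : ℕ} (A : Matrix (Fin m) (Fin m) ℝ) (i j : Fin m) (t : ℝ) :
    HasDerivAt (fun s => intExp A s i j) (mexp (t • A) i j) t :=
  ((continuous_apply j).comp ((continuous_apply i).comp (continuous_mexp_smul A))
    |>.integral_hasStrictDerivAt 0 t).hasDerivAt

theorem intExp_zero {m : ℕ} (A : Matrix (Fin m) (Fin m) ℝ) : intExp A 0 = 0 := by
  ext; simp [intExp]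

theorem hasDerivAt_mulVec_of_hasDerivAt_apply {m k : ℕ} {M : ℝ → Matrix (Fin m) (Fin k) ℝ}
    {M' : Matrix (Fin m) (Fin k) ℝ} {t : ℝ} (hM : ∀ i j, HasDerivAt (fun s => M s i j) (M' i j) t)
    (x : Fin k → ℝ) : HasDerivAt (fun s => M s *ᵥ x) (M' *ᵥ x) t :=
  hasDerivAt_pi.2 fun i => by
    simpa only [mulVec, dotProduct] using HasDerivAt.fun_sum fun j _ => (hM i j).mul_const (x j)

theorem hasDerivAt_mexp_smul_mulVec {m : ℕ} (B : Matrix (Fin m) (Fin m) ℝ) (x : Fin m → ℝ)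
    (t : ℝ) : HasDerivAt (fun s => mexp (s • B) *ᵥ x) (B *ᵥ (mexp (t • B) *ᵥ x)) t := by
  rw [mulVec_mulVec]
  exact hasDerivAt_mulVec_of_hasDerivAt_apply (hasDerivAt_mexp_smul_apply B · · t) x

theorem eq_mexp_smul_mulVec_of_hasDerivAt {m : ℕ} {B : Matrix (Fin m) (Fin m) ℝ}
    {g : ℝ → Fin m → ℝ} (hg : ∀ t, HasDerivAt g (B *ᵥ g t) t) :
    g = fun t => mexp (t • B) *ᵥ g 0 := by
  have hLip : LipschitzWith ‖(mulVecLin B).toContinuousLinearMap‖₊ (B *ᵥ ·) :=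
    (mulVecLin B).toContinuousLinearMap.lipschitz
  refine ODE_solution_unique_univ (v := fun _ => (B *ᵥ ·)) (s := fun _ => Set.univ) (t₀ := 0)
    (fun _ => hLip.lipschitzOnWith) (fun t => ⟨hg t, trivial⟩)
    (fun t => ⟨hasDerivAt_mexp_smul_mulVec B (g 0) t, trivial⟩) ?_
  simp [mexp]

theorem hasDerivAt_snoc_const {m : ℕ} {p : ℝ → Fin m → ℝ} {p' : Fin m → ℝ} {t : ℝ}
    (hp : HasDerivAt p p' t) (c : ℝ) :
    HasDerivAt (fun s => (Fin.snoc (p s) c : Fin (m + 1) → ℝ)) (Fin.snoc p' 0) t := by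
  refine hasDerivAt_pi.2 fun i => Fin.lastCases ?_ (fun i => ?_) i
  · simpa using hasDerivAt_const t c
  · simpa using hasDerivAt_pi.1 hp i

theorem aug_mulVec_snoc {n : ℕ} (A : Matrix (Fin n) (Fin n) ℝ) (u x : Fin n → ℝ) (c : ℝ) :
    aug A u *ᵥ Fin.snoc x c = Fin.snoc (A *ᵥ x + c • u) 0 := by
  ext i
  refine Fin.lastCases ?_ (fun i => ?_) i
  · simp [aug, mulVec, dotProduct]
  · simp [aug, mulVec, dotProduct, Fin.sum_univ_castSucc, mul_comm]

theorem mexp_smul_aug_mulVec_single_last {n : ℕ} (A : Matrix (Fin n) (Fin n) ℝ) (u : Fin n → ℝ)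
    (t : ℝ) : mexp (t • aug A u) *ᵥ Pi.single (Fin.last n) 1 = Fin.snoc (intExp A t *ᵥ u) 1 := by
  set g : ℝ → Fin (n + 1) → ℝ := fun t => Fin.snoc (intExp A t *ᵥ u) 1
  have hg : ∀ t, HasDerivAt g (aug A u *ᵥ g t) t := fun t => by
    have hslope : aug A u *ᵥ g t = Fin.snoc (mexp (t • A) *ᵥ u) 0 := by
      rw [aug_mulVec_snoc, one_smul, mulVec_mulVec, ← mul_intExp_add_one, add_mulVec, one_mulVec]
    rw [hslope]
    exact hasDerivAt_snoc_const
      (hasDerivAt_mulVec_of_hasDerivAt_apply (hasDerivAt_intExp_apply A · · t) u) 1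
  have hg0 : g 0 = Pi.single (Fin.last n) 1 := by
    ext i
    refine Fin.lastCases ?_ (fun i => ?_) i <;> simp [g, intExp_zero]
  rw [← hg0, ← congrFun (eq_mexp_smul_mulVec_of_hasDerivAt hg) t]

theorem abs_apply_le_enorm2 {m : ℕ} (x : Fin m → ℝ) (i : Fin m) : |x i| ≤ enorm2 x :=
  PiLp.norm_apply_le (WithLp.toLp 2 x) i

theorem stmt12_general {n ξ : ℕ} [NeZero ξ]
    (A : Matrix (Fin n) (Fin n) ℝ) (u : Fin n → ℝ) (δ : ℝ)
    (Vt : Matrix (Fin (n + 1)) (Fin ξ) ℝ) (Ht : Matrix (Fin ξ) (Fin ξ) ℝ)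
    (εt : ℝ)
    (hbound : enorm2 (mexp (δ • aug A u) *ᵥ Pi.single (Fin.last n) 1
          - Vt *ᵥ (mexp (δ • Ht) *ᵥ e1)) ≤ εt * δ) :
    ∀ i : Fin n,
      |(intExp A δ *ᵥ u - proj (Vt *ᵥ (mexp (δ • Ht) *ᵥ e1))) i| ≤ εt * δ := by
  intro i
  rw [mexp_smul_aug_mulVec_single_last] at hbound
  simpa [proj] using (abs_apply_le_enorm2 _ i.castSucc).trans hbound

/-- Krylov error of the constant input solution: if the Krylov
approximation of `exp(Ã δ) x̃₀` has Euclidean error at most `ε̃ δ`, then the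
constant-input particular solution `∫_0^δ exp(A s) ds · u` is componentwise within
`ε̃ δ` of `P Ṽ exp(H̃ δ) e₁`. -/
theorem stmt12 {n ξ : ℕ} [NeZero ξ]
    (A : Matrix (Fin n) (Fin n) ℝ) (u : Fin n → ℝ) (δ : ℝ) (hδ : 0 ≤ δ)
    (Vt : Matrix (Fin (n + 1)) (Fin ξ) ℝ) (Ht : Matrix (Fin ξ) (Fin ξ) ℝ)
    (εt : ℝ) (hεt : 0 ≤ εt)
    (hbound : enorm2 (mexp (δ • aug A u) *ᵥ Pi.single (Fin.last n) 1
          - Vt *ᵥ (mexp (δ • Ht) *ᵥ e1)) ≤ εt * δ) :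
    ∀ i : Fin n,
      |(intExp A δ *ᵥ u - proj (Vt *ᵥ (mexp (δ • Ht) *ᵥ e1))) i| ≤ εt * δ :=
  stmt12_general A u δ Vt Ht εt hbound
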